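/- Let ψ be a smooth function of (x_1, …, x_{2n}) annihilated, for each k, by the operator (κ/2)∂_{kk} + Σ_{l≠k} (2/(x_l−x_k))∂_l + (κ−6)/(x_k − x_{ι(k)}) ∂_k + ((κ−6)/κ) Σ_{{j,ι(j)}≠{k,ι(k)}} (1/(x_j−x_k) − 1/(x_{ι(j)}−x_k))², where ι is the involution ι(2i−1) = 2i, ι(2i) = 2i−1. Then the function Ψ = ψ · ∏_{j=1}^n (x_{2j} − x_{2j−1})^{1 − 6/κ} is annihilated, for each k, by the operator (κ/2)∂_{kk} + Σ_{l≠k} (2/(x_l−x_k))∂_l + ((κ−6)/κ) Σ_{l≠k} 1/(x_l−x_k)². -/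

import Mathlib

open scoped BigOperators

/-- Partial derivative `∂_{x_k}`. -/
noncomputable def Dp (m : ℕ) (k : Fin m) (G : (Fin m → ℝ) → ℝ) : (Fin m → ℝ) → ℝ :=
  fun x => deriv (fun u => G (Function.update x k u)) (x k)

/-- The pairing involution `ι(2i) = 2i+1`, `ι(2i+1) = 2i` (0-indexed) on `Fin (2n)`. -/
def iota (n : ℕ) (k : Fin (2 * n)) : Fin (2 * n) :=
  ⟨if k.val % 2 = 0 then k.val + 1 else k.val - 1, by
    have := k.isLt; split <;> omega⟩

/-- The multiple-SLE operator with pairing `ι`, acting at the point `x_k`: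
`(κ/2)∂ₖₖ + Σ_{l≠k}(2/(x_l−x_k))∂_l + ((κ−6)/(x_k−x_{ι(k)}))∂ₖ
  + ((κ−6)/κ) Σ_{{j,ι(j)}≠{k,ι(k)}} (1/(x_j−x_k) − 1/(x_{ι(j)}−x_k))²`. -/
noncomputable def pairedOp (n : ℕ) (κ : ℝ) (k : Fin (2 * n)) (ψ : (Fin (2 * n) → ℝ) → ℝ) :
    (Fin (2 * n) → ℝ) → ℝ :=
  fun x => κ / 2 * Dp (2 * n) k (Dp (2 * n) k ψ) x +
    (∑ l ∈ Finset.univ.filter (fun l => l ≠ k), 2 / (x l - x k) * Dp (2 * n) l ψ x) +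
    (κ - 6) / (x k - x (iota n k)) * Dp (2 * n) k ψ x +
    ((κ - 6) / κ) *
      (∑ j ∈ Finset.univ.filter (fun j => j < iota n j ∧ j ≠ k ∧ j ≠ iota n k),
        (1 / (x j - x k) - 1 / (x (iota n j) - x k)) ^ 2) * ψ x

/-- The symmetrized multiple-SLE operator
`(κ/2)∂ₖₖ + Σ_{l≠k}(2/(x_l−x_k))∂_l + ((κ−6)/κ) Σ_{l≠k} (x_l−x_k)⁻²`. -/
noncomputable def symOp (n : ℕ) (κ : ℝ) (k : Fin (2 * n)) (Φ : (Fin (2 * n) → ℝ) → ℝ) :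
    (Fin (2 * n) → ℝ) → ℝ :=
  fun x => κ / 2 * Dp (2 * n) k (Dp (2 * n) k Φ) x +
    (∑ l ∈ Finset.univ.filter (fun l => l ≠ k), 2 / (x l - x k) * Dp (2 * n) l Φ x) +
    ((κ - 6) / κ) * (∑ l ∈ Finset.univ.filter (fun l => l ≠ k), 1 / (x l - x k) ^ 2) * Φ x

open Finset
open scoped ContDiff

/-! ### Auxiliary lemmas -/

lemma iota_val (n : ℕ) (k : Fin (2*n)) :
    (iota n k).val = if k.val % 2 = 0 then k.val + 1 else k.val - 1 := rfl

lemma iota_iota (n : ℕ) (k : Fin (2*n)) : iota n (iota n k) = k := by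
  apply Fin.ext; rw [iota_val, iota_val]
  by_cases h0 : k.val % 2 = 0
  · rw [if_pos h0]
    have h1 : ¬ ((k.val + 1) % 2 = 0) := by omega
    rw [if_neg h1]; omega
  · rw [if_neg h0]
    have h1 : (k.val - 1) % 2 = 0 := by omega
    rw [if_pos h1]; omega

lemma iota_ne (n : ℕ) (k : Fin (2*n)) : iota n k ≠ k := by
  intro h
  have h2 : (iota n k).val = k.val := congrArg Fin.val h
  rw [iota_val] at h2; split at h2 <;> omega

lemma lt_iota_iff (n : ℕ) (k : Fin (2*n)) : k < iota n k ↔ k.val % 2 = 0 := by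
  rw [Fin.lt_def, iota_val]; split <;> omega

/-- representative (smaller element) of the pair of `k` -/
def pairRep (n : ℕ) (k : Fin (2*n)) : Fin (2*n) := if k < iota n k then k else iota n k

/-- sign of the pair factor as seen from `k` -/
noncomputable def sgn (n : ℕ) (k : Fin (2*n)) : ℝ := if k < iota n k then -1 else 1

/-- set of pair representatives -/
def P (n : ℕ) : Finset (Fin (2*n)) := Finset.univ.filter (fun j => j < iota n j)

lemma sgn_sq (n : ℕ) (k : Fin (2*n)) : sgn n k * sgn n k = 1 := by
  rw [sgn]; split <;> norm_num

lemma pairRep_mem (n : ℕ) (k : Fin (2*n)) : pairRep n k ∈ P n := by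
  unfold pairRep P
  rcases lt_trichotomy k (iota n k) with h | h | h
  · rw [if_pos h]; simp [h]
  · exact absurd h.symm (iota_ne n k)
  · rw [if_neg (not_lt_of_gt h)]
    simp only [mem_filter, mem_univ, true_and]
    rw [iota_iota]; exact h

lemma iota_pairRep (n : ℕ) (k : Fin (2*n)) :
    (pairRep n k = k ∧ iota n (pairRep n k) = iota n k) ∨
    (pairRep n k = iota n k ∧ iota n (pairRep n k) = k) := by
  unfold pairRep
  by_cases h : k < iota n k
  · left; rw [if_pos h]; exact ⟨rfl, rfl⟩
  · right; rw [if_neg h]; exact ⟨rfl, iota_iota n k⟩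

lemma mem_P_erase (n : ℕ) (k j : Fin (2*n)) (hj : j ∈ (P n).erase (pairRep n k)) :
    j ≠ k ∧ iota n j ≠ k := by
  rw [mem_erase] at hj
  obtain ⟨hne, hjP⟩ := hj
  rw [P, mem_filter] at hjP
  have hjlt : j < iota n j := hjP.2
  have hje : j.val % 2 = 0 := (lt_iota_iff n j).mp hjlt
  by_cases hk : k < iota n k
  · have hke : k.val % 2 = 0 := (lt_iota_iff n k).mp hk
    unfold pairRep at hne; rw [if_pos hk] at hne
    refine ⟨hne, ?_⟩
    intro h
    have := congrArg Fin.val h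
    rw [iota_val] at this
    rw [if_pos hje] at this
    omega
  · have hke : ¬ (k.val % 2 = 0) := fun h => hk ((lt_iota_iff n k).mpr h)
    unfold pairRep at hne; rw [if_neg hk] at hne
    constructor
    · intro h; subst h; exact hke hje
    · intro h
      apply hne
      rw [← h, iota_iota]

lemma Q_eq_erase (n : ℕ) (k : Fin (2*n)) :
    Finset.univ.filter (fun j => j < iota n j ∧ j ≠ k ∧ j ≠ iota n k) = (P n).erase (pairRep n k) := by
  ext j
  simp only [mem_filter, mem_univ, true_and, mem_erase]
  constructor
  · rintro ⟨h1, h2, h3⟩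
    refine ⟨?_, by rw [P, mem_filter]; exact ⟨mem_univ j, h1⟩⟩
    unfold pairRep; split <;> [exact h2; exact h3]
  · rintro ⟨hne, hjP⟩
    have hjlt : j < iota n j := by
      rw [P, mem_filter] at hjP; exact hjP.2
    obtain ⟨ha, hb⟩ := mem_P_erase n k j (by rw [mem_erase]; exact ⟨hne, hjP⟩)
    refine ⟨hjlt, ha, ?_⟩
    intro h
    rw [h, iota_iota] at hb
    exact hb rfl

lemma sum_pairs (n : ℕ) (k : Fin (2*n)) (T : Fin (2*n) → ℝ) :
    ∑ l ∈ Finset.univ.filter (fun l => l ≠ k), T l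
      = T (iota n k) + ∑ j ∈ (P n).erase (pairRep n k), (T j + T (iota n j)) := by
  have huniv : ∑ l, T l = ∑ j ∈ P n, (T j + T (iota n j)) := by
    rw [Finset.sum_add_distrib]
    have hsplit := Finset.sum_filter_add_sum_filter_not Finset.univ (fun j => j < iota n j) T
    have hbij : ∑ j ∈ Finset.univ.filter (fun j => ¬ j < iota n j), T j
        = ∑ j ∈ P n, T (iota n j) := by
      refine Finset.sum_nbij' (iota n) (iota n) ?_ ?_ ?_ ?_ ?_
      · intro a ha
        simp only [mem_filter, mem_univ, true_and, not_lt] at ha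
        rw [P, mem_filter]
        refine ⟨mem_univ _, ?_⟩
        rw [iota_iota]
        exact lt_of_le_of_ne ha (iota_ne n a)
      · intro a ha
        rw [P, mem_filter] at ha
        simp only [mem_filter, mem_univ, true_and, not_lt]
        rw [iota_iota]
        exact ha.2.le
      · intro a _; exact iota_iota n a
      · intro a _; exact iota_iota n a
      · intro a _; rw [iota_iota]
    rw [P] at hbij ⊢
    linarith [hsplit, hbij]
  have herase : Finset.univ.filter (fun l => l ≠ k) = Finset.univ.erase k := Finset.filter_ne' _ _
  have h2 : ∑ l ∈ Finset.univ.erase k, T l + T k = ∑ l, T l := Finset.sum_erase_add _ _ (mem_univ k)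
  have h3 : T (pairRep n k) + T (iota n (pairRep n k))
      + ∑ j ∈ (P n).erase (pairRep n k), (T j + T (iota n j)) = ∑ j ∈ P n, (T j + T (iota n j)) := by
    have h3' := Finset.add_sum_erase (P n) (fun j => T j + T (iota n j)) (pairRep_mem n k)
    linarith [h3']
  have h4 : T (pairRep n k) + T (iota n (pairRep n k)) = T k + T (iota n k) := by
    rcases iota_pairRep n k with ⟨h5, h6⟩ | ⟨h5, h6⟩ <;> rw [h6, h5] <;> ring
  rw [herase]
  linarith [h2, h3, h4, huniv]

noncomputable def Fprod (n : ℕ) (hh : ℝ) (w : Fin (2*n) → ℝ) : ℝ :=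
  ∏ j ∈ P n, (w (iota n j) - w j) ^ hh

noncomputable def Ck (n : ℕ) (hh : ℝ) (x : Fin (2*n) → ℝ) (k : Fin (2*n)) : ℝ :=
  ∏ j ∈ (P n).erase (pairRep n k), (x (iota n j) - x j) ^ hh

lemma F_update_eq (n : ℕ) (hh : ℝ) (x : Fin (2*n) → ℝ) (k : Fin (2*n)) (v : ℝ) :
    Fprod n hh (Function.update x k v)
      = (sgn n k * (v - x (iota n k))) ^ hh * Ck n hh x k := by
  rw [Fprod, ← Finset.mul_prod_erase _ _ (pairRep_mem n k), Ck]
  congr 1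
  · by_cases hlt : k < iota n k
    · rw [pairRep, if_pos hlt, sgn, if_pos hlt,
        Function.update_of_ne (iota_ne n k), Function.update_self]
      congr 1; ring
    · rw [pairRep, if_neg hlt, sgn, if_neg hlt, iota_iota,
        Function.update_self, Function.update_of_ne (Ne.symm (fun h => iota_ne n k h.symm))]
      congr 1; ring
  · apply Finset.prod_congr rfl
    intro j hj
    obtain ⟨ha, hb⟩ := mem_P_erase n k j hj
    rw [Function.update_of_ne hb, Function.update_of_ne ha]

lemma hasDerivAt_sgn_rpow (ε c hh v : ℝ) (hpos : 0 < ε * (v - c)) (hsq : ε * ε = 1) :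
    HasDerivAt (fun w => (ε * (w - c)) ^ hh) (hh * ((ε * (v - c)) ^ hh) * (v - c)⁻¹) v := by
  have h1 : HasDerivAt (fun w : ℝ => ε * (w - c)) ε v := by
    simpa using ((hasDerivAt_id v).sub_const c).const_mul ε
  have h2 := h1.rpow_const (p := hh) (Or.inl (ne_of_gt hpos))
  convert h2 using 1
  rw [Real.rpow_sub_one (ne_of_gt hpos)]
  have hvc : v - c ≠ 0 := by
    intro h; rw [h, mul_zero] at hpos; exact lt_irrefl 0 hpos
  have hε : ε ≠ 0 := by intro h; rw [h] at hsq; simp at hsq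
  field_simp

lemma contDiff_line {m : ℕ} (x : Fin m → ℝ) (k : Fin m) :
    ContDiff ℝ (⊤ : ℕ∞) (fun u : ℝ => Function.update x k u) := by
  rw [contDiff_pi]
  intro i
  by_cases h : i = k
  · subst h
    simp only [Function.update_self]
    exact contDiff_id
  · simp only [Function.update_of_ne h]
    exact contDiff_const

lemma dp_line {m : ℕ} (k : Fin m) (G : (Fin m → ℝ) → ℝ) (x : Fin m → ℝ) (v : ℝ) :
    Dp m k G (Function.update x k v) = deriv (fun u => G (Function.update x k u)) v := by
  simp only [Dp, Function.update_idem, Function.update_self]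

lemma sgn_pos (n : ℕ) (k : Fin (2*n)) (x : Fin (2*n) → ℝ) (hx : StrictMono x) :
    0 < sgn n k * (x k - x (iota n k)) := by
  rw [sgn]
  by_cases hlt : k < iota n k
  · rw [if_pos hlt]
    have := hx hlt
    nlinarith
  · rw [if_neg hlt]
    have hlt2 : iota n k < k := lt_of_le_of_ne (not_lt.mp hlt) (iota_ne n k)
    have := hx hlt2
    nlinarith

lemma dp_psiF (n : ℕ) (hh : ℝ) (ψ : (Fin (2*n) → ℝ) → ℝ) (hψ : ContDiff ℝ (⊤ : ℕ∞) ψ)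
    (x : Fin (2*n) → ℝ) (hx : StrictMono x) (l : Fin (2*n)) :
    Dp (2*n) l (fun w => ψ w * Fprod n hh w) x
      = Dp (2*n) l ψ x * Fprod n hh x
        + ψ x * (hh * (x l - x (iota n l))⁻¹) * Fprod n hh x := by
  have hpos := sgn_pos n l x hx
  have hf : ContDiff ℝ (⊤ : ℕ∞) (fun v => ψ (Function.update x l v)) := hψ.comp (contDiff_line x l)
  have hfd : HasDerivAt (fun v => ψ (Function.update x l v)) (Dp (2*n) l ψ x) (x l) :=
    ((hf.differentiable (by simp)) (x l)).hasDerivAt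
  have hE := hasDerivAt_sgn_rpow (sgn n l) (x (iota n l)) hh (x l) hpos (sgn_sq n l)
  have hfun : (fun v => ψ (Function.update x l v) * Fprod n hh (Function.update x l v))
      = fun v => ψ (Function.update x l v) * ((sgn n l * (v - x (iota n l))) ^ hh * Ck n hh x l) := by
    funext v; rw [F_update_eq]
  have hD := hfd.mul (hE.mul_const (Ck n hh x l))
  simp only [Pi.mul_def] at hD
  rw [← hfun] at hD
  have hval := hD.deriv
  show deriv (fun v => ψ (Function.update x l v) * Fprod n hh (Function.update x l v)) (x l) = _
  rw [hval]
  have hFx : (sgn n l * (x l - x (iota n l))) ^ hh * Ck n hh x l = Fprod n hh x := by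
    rw [← F_update_eq, Function.update_eq_self]
  simp only [Function.update_eq_self]
  rw [← hFx]
  ring

lemma dp2_psiF (n : ℕ) (hh : ℝ) (ψ : (Fin (2*n) → ℝ) → ℝ) (hψ : ContDiff ℝ (⊤ : ℕ∞) ψ)
    (x : Fin (2*n) → ℝ) (hx : StrictMono x) (k : Fin (2*n)) :
    Dp (2*n) k (Dp (2*n) k (fun w => ψ w * Fprod n hh w)) x
      = Dp (2*n) k (Dp (2*n) k ψ) x * Fprod n hh x
        + 2 * Dp (2*n) k ψ x * (hh * (x k - x (iota n k))⁻¹) * Fprod n hh x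
        + ψ x * ((hh * hh - hh) * ((x k - x (iota n k))⁻¹ * (x k - x (iota n k))⁻¹))
            * Fprod n hh x := by
  have hpos := sgn_pos n k x hx
  have hf : ContDiff ℝ (⊤ : ℕ∞) (fun v => ψ (Function.update x k v)) := hψ.comp (contDiff_line x k)
  have hfdiff : Differentiable ℝ (fun v => ψ (Function.update x k v)) := hf.differentiable (by simp)
  have hf' : ContDiff ℝ ∞ (deriv (fun v => ψ (Function.update x k v))) :=
    (contDiff_infty_iff_deriv.mp (hf.of_le (by simp))).2
  have hf'diff : Differentiable ℝ (deriv (fun v => ψ (Function.update x k v))) :=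
    hf'.differentiable (by simp)
  have hfun : (fun v => ψ (Function.update x k v) * Fprod n hh (Function.update x k v))
      = fun v => ψ (Function.update x k v)
          * ((sgn n k * (v - x (iota n k))) ^ hh * Ck n hh x k) := by
    funext v; rw [F_update_eq]
  have hopen : IsOpen {v : ℝ | 0 < sgn n k * (v - x (iota n k))} :=
    isOpen_lt continuous_const (by fun_prop)
  have hmem : x k ∈ {v : ℝ | 0 < sgn n k * (v - x (iota n k))} := hpos
  have hxc : x k - x (iota n k) ≠ 0 := by
    intro h
    rw [h, mul_zero] at hpos
    exact lt_irrefl 0 hpos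
  have hev : (fun u => Dp (2*n) k (fun w => ψ w * Fprod n hh w) (Function.update x k u))
      =ᶠ[nhds (x k)] (fun v =>
        deriv (fun w => ψ (Function.update x k w)) v
            * ((sgn n k * (v - x (iota n k))) ^ hh * Ck n hh x k)
          + ψ (Function.update x k v)
            * (hh * ((sgn n k * (v - x (iota n k))) ^ hh * (v - x (iota n k))⁻¹)
                * Ck n hh x k)) := by
    filter_upwards [hopen.mem_nhds hmem] with v hv
    have hfd : HasDerivAt (fun w => ψ (Function.update x k w))
        (deriv (fun w => ψ (Function.update x k w)) v) v := (hfdiff v).hasDerivAt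
    have hE := hasDerivAt_sgn_rpow (sgn n k) (x (iota n k)) hh v hv (sgn_sq n k)
    have hD := hfd.mul (hE.mul_const (Ck n hh x k))
    simp only [Pi.mul_def] at hD
    rw [← hfun] at hD
    rw [dp_line]
    show deriv (fun v => ψ (Function.update x k v) * Fprod n hh (Function.update x k v)) v = _
    rw [hD.deriv]
    ring
  show deriv (fun u => Dp (2*n) k (fun w => ψ w * Fprod n hh w) (Function.update x k u)) (x k) = _
  rw [hev.deriv_eq]
  have hE0 := hasDerivAt_sgn_rpow (sgn n k) (x (iota n k)) hh (x k) hpos (sgn_sq n k)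
  have hfd0 : HasDerivAt (fun w => ψ (Function.update x k w))
      (deriv (fun w => ψ (Function.update x k w)) (x k)) (x k) := (hfdiff _).hasDerivAt
  have hf'd : HasDerivAt (deriv (fun w => ψ (Function.update x k w)))
      (deriv (deriv (fun w => ψ (Function.update x k w))) (x k)) (x k) := (hf'diff _).hasDerivAt
  have hinv : HasDerivAt (fun v : ℝ => v - x (iota n k)) 1 (x k) :=
    (hasDerivAt_id _).sub_const _
  have hinv' := hinv.inv hxc
  have hG := (hf'd.mul (hE0.mul_const (Ck n hh x k))).add
    (hfd0.mul (((hE0.mul hinv').const_mul hh).mul_const (Ck n hh x k)))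
  refine (hG.deriv).trans ?_
  simp only [Pi.mul_apply, Pi.inv_apply]
  have hFx : (sgn n k * (x k - x (iota n k))) ^ hh * Ck n hh x k = Fprod n hh x := by
    rw [← F_update_eq, Function.update_eq_self]
  have h2 : Dp (2*n) k (Dp (2*n) k ψ) x
      = deriv (deriv (fun w => ψ (Function.update x k w))) (x k) := by
    show deriv (fun u => Dp (2*n) k ψ (Function.update x k u)) (x k) = _
    congr 1
    funext u
    exact dp_line k ψ x u
  have h3 : Dp (2*n) k ψ x = deriv (fun w => ψ (Function.update x k w)) (x k) := rfl
  rw [h2, h3, ← hFx]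
  simp only [Function.update_eq_self]
  have hpow : ((x k - x (iota n k)) ^ 2)⁻¹
      = (x k - x (iota n k))⁻¹ * (x k - x (iota n k))⁻¹ := by rw [sq, mul_inv]
  rw [div_eq_mul_inv, hpow]
  ring

set_option maxHeartbeats 2000000 in
/-- If `ψ` is annihilated by the paired multiple-SLE operators, then
`Ψ = ψ·∏_j (x_{2j}−x_{2j−1})^{1−6/κ}` is annihilated by the symmetrized operators. -/
theorem symmetrization_of_multiple_SLE_system (n : ℕ) (κ : ℝ) (hκ : 0 < κ)
    (ψ : (Fin (2 * n) → ℝ) → ℝ) (hψ : ContDiff ℝ (⊤ : ℕ∞) ψ)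
    (hsys : ∀ k, ∀ x : Fin (2 * n) → ℝ, StrictMono x → pairedOp n κ k ψ x = 0) :
    ∀ k, ∀ x : Fin (2 * n) → ℝ, StrictMono x →
      symOp n κ k
        (fun w => ψ w *
          ∏ j ∈ Finset.univ.filter (fun j => j < iota n j),
            (w (iota n j) - w j) ^ ((1 : ℝ) - 6 / κ)) x = 0 := by
  intro k x hx
  have hκ' : κ ≠ 0 := ne_of_gt hκ
  have hkm : x k - x (iota n k) ≠ 0 :=
    sub_ne_zero.2 (fun h => iota_ne n k (hx.injective h.symm))
  have hmk : x (iota n k) - x k ≠ 0 :=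
    sub_ne_zero.2 (fun h => iota_ne n k (hx.injective h))
  show symOp n κ k (fun w => ψ w * Fprod n (1 - 6/κ) w) x = 0
  simp only [symOp]
  rw [dp2_psiF n (1 - 6/κ) ψ hψ x hx k]
  have hsum0 : ∑ l ∈ Finset.univ.filter (fun l => l ≠ k),
        2 / (x l - x k) * Dp (2*n) l (fun w => ψ w * Fprod n (1 - 6/κ) w) x
      = ∑ l ∈ Finset.univ.filter (fun l => l ≠ k),
          (2 / (x l - x k) * Dp (2*n) l ψ x * Fprod n (1 - 6/κ) x
            + 2 / (x l - x k) * ((1 - 6/κ) * (x l - x (iota n l))⁻¹)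
                * (ψ x * Fprod n (1 - 6/κ) x)) := by
    apply Finset.sum_congr rfl
    intro l _
    rw [dp_psiF n (1 - 6/κ) ψ hψ x hx l]
    ring
  rw [hsum0, Finset.sum_add_distrib, ← Finset.sum_mul, ← Finset.sum_mul]
  have hs1 := sum_pairs n k (fun l => 2 / (x l - x k) * ((1 - 6/κ) * (x l - x (iota n l))⁻¹))
  have hs2 := sum_pairs n k (fun l => 1 / (x l - x k) ^ 2)
  simp only [iota_iota] at hs1
  rw [hs1, hs2]
  have hcomb : ∑ j ∈ (P n).erase (pairRep n k),
        (2 / (x j - x k) * ((1 - 6/κ) * (x j - x (iota n j))⁻¹)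
          + 2 / (x (iota n j) - x k) * ((1 - 6/κ) * (x (iota n j) - x j)⁻¹))
      + (1 - 6/κ) * ∑ j ∈ (P n).erase (pairRep n k),
          (1 / (x j - x k) ^ 2 + 1 / (x (iota n j) - x k) ^ 2)
      = (1 - 6/κ) * ∑ j ∈ (P n).erase (pairRep n k),
          (1 / (x j - x k) - 1 / (x (iota n j) - x k)) ^ 2 := by
    rw [Finset.mul_sum, Finset.mul_sum, ← Finset.sum_add_distrib]
    apply Finset.sum_congr rfl
    intro j hj
    obtain ⟨hjk, hjik⟩ := mem_P_erase n k j hj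
    have h1 : x j - x k ≠ 0 := sub_ne_zero.2 (fun h => hjk (hx.injective h))
    have h2 : x (iota n j) - x k ≠ 0 := sub_ne_zero.2 (fun h => hjik (hx.injective h))
    have h3 : x j - x (iota n j) ≠ 0 :=
      sub_ne_zero.2 (fun h => iota_ne n j (hx.injective h.symm))
    have h4 : x (iota n j) - x j ≠ 0 :=
      sub_ne_zero.2 (fun h => iota_ne n j (hx.injective h))
    field_simp
    ring
  have hP := hsys k x hx
  simp only [pairedOp] at hP
  rw [Q_eq_erase n k] at hP
  linear_combination (norm := (field_simp; ring))
    Fprod n (1 - 6/κ) x * hP + (ψ x * Fprod n (1 - 6/κ) x) * hcomb
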